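/- arXiv:2505.13768 — 4 statements merged into one kernel-verified Lean document; each statement's English description precedes it below -/
import Mathlib

section
/- Deterministic core of Theorem 3.5 (sub-optimality gap of the hybrid RL framework): Let T be a positive integer and let N₀ > 0, K ≥ 1, C > 0 be real numbers. Let u₁, …, u_T be nonnegative real numbers with ∑_{t=1}^T u_t² ≤ C². If g is a real number satisfying 0 ≤ g ≤ 2 · min( C·√(K/N₀), (1/T)·∑_{t=1}^T u_t ), then g ≤ 2·√2 · C / √( N₀/K + T ). -/
set_option maxHeartbeats 1000000

open Real Finset

/-- Deterministic core of Theorem 3.5 (sub-optimality gap of the hybrid RL framework). -/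
theorem hybrid_rl_suboptimality_gap
    (T : ℕ) (hT : 0 < T) (N₀ K C : ℝ) (hN₀ : 0 < N₀) (hK : 1 ≤ K) (hC : 0 < C)
    (u : ℕ → ℝ) (hu : ∀ t ∈ Finset.range T, 0 ≤ u t)
    (hEluder : ∑ t ∈ Finset.range T, (u t) ^ 2 ≤ C ^ 2)
    (g : ℝ) (hg0 : 0 ≤ g)
    (hg : g ≤ 2 * min (C * Real.sqrt (K / N₀)) ((1 / (T : ℝ)) * ∑ t ∈ Finset.range T, u t)) :
    g ≤ 2 * Real.sqrt 2 * C / Real.sqrt (N₀ / K + T) := by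
  set S := ∑ t ∈ Finset.range T, u t with hS
  have hK0 : (0:ℝ) < K := lt_of_lt_of_le one_pos hK
  have hT0 : (0:ℝ) < (T:ℝ) := by exact_mod_cast hT
  have hSnn : 0 ≤ S := Finset.sum_nonneg hu
  have hCS : S ^ 2 ≤ (T:ℝ) * C ^ 2 := by
    calc S ^ 2 ≤ (Finset.range T).card * ∑ t ∈ Finset.range T, (u t)^2 :=
          sq_sum_le_card_mul_sum_sq
      _ ≤ (T:ℝ) * C ^ 2 := by
          rw [Finset.card_range]
          exact mul_le_mul_of_nonneg_left hEluder (le_of_lt hT0)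
  set a := C * Real.sqrt (K / N₀) with ha
  set b := (1 / (T:ℝ)) * S with hb
  have ha2 : a ^ 2 = C ^ 2 * (K / N₀) := by
    rw [ha, mul_pow, Real.sq_sqrt (by positivity)]
  have hb2 : b ^ 2 ≤ C ^ 2 / (T:ℝ) := by
    rw [hb, mul_pow, div_pow, one_pow, div_mul_eq_mul_div, one_mul,
      div_le_div_iff₀ (by positivity) hT0]
    nlinarith
  have hann : 0 ≤ a := by positivity
  have hbnn : 0 ≤ b := by positivity
  set m := min a b with hm
  have hmnn : 0 ≤ m := le_min hann hbnn
  clear_value a b m S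
  clear hu hEluder hS
  have hma : m ^ 2 ≤ a ^ 2 := by
    have := min_le_left a b
    nlinarith
  have hmb : m ^ 2 ≤ b ^ 2 := by
    have hmb' := min_le_right a b
    nlinarith
  set D := N₀ / K + (T:ℝ) with hD
  have hD0 : 0 < D := by positivity
  have key : g ^ 2 * D ≤ 8 * C ^ 2 := by
    have h1 : m ^ 2 * (N₀ / K) ≤ C ^ 2 := by
      have : a ^ 2 * (N₀ / K) = C ^ 2 := by
        rw [ha2]; field_simp
      nlinarith [div_pos hN₀ hK0]
    have h2 : m ^ 2 * (T:ℝ) ≤ C ^ 2 := by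
      have hbT : b ^ 2 * (T:ℝ) ≤ C ^ 2 := (le_div_iff₀ hT0).mp hb2
      nlinarith
    have hg2 : g ^ 2 ≤ 4 * m ^ 2 := by nlinarith [sq_nonneg (2 * m - g)]
    have hDK : 0 ≤ N₀ / K := by positivity
    calc g ^ 2 * D = g ^ 2 * (N₀ / K) + g ^ 2 * (T:ℝ) := by rw [hD]; ring
      _ ≤ 4 * m ^ 2 * (N₀ / K) + 4 * m ^ 2 * (T:ℝ) :=
          add_le_add (mul_le_mul_of_nonneg_right hg2 hDK)
            (mul_le_mul_of_nonneg_right hg2 hT0.le)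
      _ = 4 * (m ^ 2 * (N₀ / K)) + 4 * (m ^ 2 * (T:ℝ)) := by ring
      _ ≤ 4 * C ^ 2 + 4 * C ^ 2 :=
          add_le_add (by linarith) (by linarith)
      _ = 8 * C ^ 2 := by ring
  have hgs : g * Real.sqrt D ≤ 2 * Real.sqrt 2 * C := by
    have h8 : (2 * Real.sqrt 2 * C) ^ 2 = 8 * C ^ 2 := by
      have : Real.sqrt 2 ^ 2 = 2 := Real.sq_sqrt (by norm_num)
      nlinarith
    have hsq : (g * Real.sqrt D) ^ 2 ≤ (2 * Real.sqrt 2 * C) ^ 2 := by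
      rw [h8, mul_pow, Real.sq_sqrt hD0.le]; exact key
    have h1 : 0 ≤ g * Real.sqrt D := by positivity
    have h2 : 0 ≤ 2 * Real.sqrt 2 * C := by positivity
    nlinarith
  rw [le_div_iff₀ (Real.sqrt_pos.mpr hD0)]
  exact hgs
end

section
/- Deterministic core of Theorem 3.6 (regret of the hybrid RL framework): Let T be a positive integer and let N₀ > 0, K ≥ 1, C > 0 be real numbers. Let u₁, …, u_T be nonnegative real numbers with ∑_{t=1}^T u_t² ≤ C², and let g₁, …, g_T be real numbers satisfying 0 ≤ g_t ≤ 2 · min( C·√(K/N₀), u_t ) for every t. Then ∑_{t=1}^T g_t ≤ 2·√2 · C · √T · √( T / ( N₀/K + T ) ). -/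
open Real Finset

/-- Deterministic core of Theorem 3.6 (regret of the hybrid RL framework). -/
theorem hybrid_rl_regret
    (T : ℕ) (hT : 0 < T) (N₀ K C : ℝ) (hN₀ : 0 < N₀) (hK : 1 ≤ K) (hC : 0 < C)
    (u : ℕ → ℝ) (hu : ∀ t ∈ Finset.range T, 0 ≤ u t)
    (hEluder : ∑ t ∈ Finset.range T, (u t) ^ 2 ≤ C ^ 2)
    (g : ℕ → ℝ)
    (hg : ∀ t ∈ Finset.range T,
      0 ≤ g t ∧ g t ≤ 2 * min (C * Real.sqrt (K / N₀)) (u t)) :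
    ∑ t ∈ Finset.range T, g t
      ≤ 2 * Real.sqrt 2 * C * Real.sqrt T * Real.sqrt ((T : ℝ) / (N₀ / K + T)) := by
  set m := C * Real.sqrt (K / N₀) with hm
  have hK0 : (0:ℝ) < K := lt_of_lt_of_le one_pos hK
  have hKN : 0 < K / N₀ := div_pos hK0 hN₀
  have hm0 : 0 < m := mul_pos hC (Real.sqrt_pos.mpr hKN)
  have hm2 : m ^ 2 = C ^ 2 * (K / N₀) := by
    rw [hm, mul_pow, Real.sq_sqrt hKN.le]
  set v := fun t => min m (u t) with hv
  have hv0 : ∀ t ∈ Finset.range T, 0 ≤ v t := fun t ht => le_min hm0.le (hu t ht)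
  have hvsq : ∀ t ∈ Finset.range T, v t ^ 2 = min (m ^ 2) (u t ^ 2) := by
    intro t ht
    rcases le_total m (u t) with h | h
    · rw [hv]; dsimp only
      rw [min_eq_left h, min_eq_left (by nlinarith [hu t ht, hm0.le])]
    · rw [hv]; dsimp only
      rw [min_eq_right h, min_eq_right (by nlinarith [hu t ht, hm0.le])]
  have hS1 : ∑ t ∈ Finset.range T, v t ^ 2 ≤ T * m ^ 2 := by
    calc ∑ t ∈ Finset.range T, v t ^ 2
        ≤ ∑ t ∈ Finset.range T, m ^ 2 := by
          refine Finset.sum_le_sum fun t ht => ?_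
          rw [hvsq t ht]; exact min_le_left _ _
      _ = T * m ^ 2 := by simp [mul_comm]
  have hS2 : ∑ t ∈ Finset.range T, v t ^ 2 ≤ C ^ 2 := by
    refine le_trans (Finset.sum_le_sum fun t ht => ?_) hEluder
    rw [hvsq t ht]; exact min_le_right _ _
  set S := ∑ t ∈ Finset.range T, v t ^ 2 with hSdef
  have hT0 : (0:ℝ) < T := by exact_mod_cast hT
  have hA : (0:ℝ) < T * m ^ 2 := by positivity
  have hB : (0:ℝ) < C ^ 2 := by positivity
  have hD : (0:ℝ) < N₀ / K + T := by positivity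
  have hSbound : S ≤ 2 * C ^ 2 * T / (N₀ / K + T) := by
    have key : S * (T * m ^ 2 + C ^ 2) ≤ 2 * (T * m ^ 2) * C ^ 2 := by
      nlinarith [hS1, hS2]
    rw [le_div_iff₀ hD]
    have hK' : K ≠ 0 := ne_of_gt hK0
    have hmc : m ^ 2 * (N₀ / K) = C ^ 2 := by
      rw [hm2]; field_simp
    have hm2pos : 0 < m ^ 2 := by positivity
    nlinarith [key, hmc, hm2pos, mul_pos hm2pos hT0]
  have hgs : ∑ t ∈ Finset.range T, g t ≤ 2 * ∑ t ∈ Finset.range T, v t := by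
    rw [Finset.mul_sum]
    exact Finset.sum_le_sum fun t ht => (hg t ht).2
  have hsum0 : 0 ≤ ∑ t ∈ Finset.range T, v t := Finset.sum_nonneg hv0
  have hcs : (∑ t ∈ Finset.range T, v t) ^ 2 ≤ T * S := by
    have := sq_sum_le_card_mul_sum_sq (s := Finset.range T) (f := v)
    simpa using this
  set R := 2 * Real.sqrt 2 * C * Real.sqrt T * Real.sqrt ((T : ℝ) / (N₀ / K + T))
    with hR
  have hR0 : 0 ≤ R := by positivity
  have hRsq : R ^ 2 = 8 * C ^ 2 * T * ((T : ℝ) / (N₀ / K + T)) := by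
    rw [hR, mul_pow, mul_pow, mul_pow, mul_pow, Real.sq_sqrt (by norm_num : (0:ℝ) ≤ 2),
      Real.sq_sqrt hT0.le, Real.sq_sqrt (div_nonneg hT0.le hD.le)]
    ring
  have hSbound' : S ≤ 2 * C ^ 2 * ((T : ℝ) / (N₀ / K + T)) := by
    calc S ≤ 2 * C ^ 2 * T / (N₀ / K + T) := hSbound
      _ = 2 * C ^ 2 * ((T : ℝ) / (N₀ / K + T)) := by ring
  have hsq : (2 * ∑ t ∈ Finset.range T, v t) ^ 2 ≤ R ^ 2 := by
    rw [hRsq]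
    nlinarith [hcs, hSbound', hT0.le, mul_le_mul_of_nonneg_left hSbound' hT0.le]
  have hfin : 2 * ∑ t ∈ Finset.range T, v t ≤ R := by
    calc 2 * ∑ t ∈ Finset.range T, v t
        = Real.sqrt ((2 * ∑ t ∈ Finset.range T, v t) ^ 2) :=
          (Real.sqrt_sq (by linarith)).symm
      _ ≤ Real.sqrt (R ^ 2) := Real.sqrt_le_sqrt hsq
      _ = R := Real.sqrt_sq hR0
  linarith
end

section
/- Elliptical potential lemma used to verify the Eluder-type condition for Lin-UCB: let d and T be positive integers, λ ≥ 1 a real number, and φ₁, …, φ_T ∈ ℝ^d vectors with Euclidean norm ‖φ_t‖₂ ≤ 1 for all t. Define the d×d matrices Λ₀ = λ·I_d and Λ_t = Λ_{t-1} + φ_t φ_tᵀ for t = 1, …, T. Then every Λ_t is positive definite (hence invertible), and ∑_{t=1}^T φ_tᵀ Λ_{t-1}^{-1} φ_t ≤ 2·d·log( 1 + T/(λ·d) ). -/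
/-!
By the matrix determinant lemma, `det Λ (t + 1) = det Λ t * (1 + w t)` with
`w t = φ t ⬝ᵥ (Λ t)⁻¹ *ᵥ φ t`, and `0 ≤ w t ≤ ‖φ t‖² / λ ≤ 1` because `λ • 1 ≤ Λ t`.
Since `x ≤ 2 log (1 + x)` on `[0, 1]` and the sum of the `log (1 + w t)` telescopes,
`∑ w t ≤ 2 log (det Λ T / det Λ 0)`. Finally `det Λ 0 = λ ^ d`, and AM–GM on the eigenvalues gives
`det Λ T ≤ (tr Λ T / d) ^ d ≤ (λ + T / d) ^ d`.
-/

open Real Finset Matrix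

theorem Real.le_two_mul_log_one_add {x : ℝ} (hx₀ : 0 ≤ x) (hx₂ : x ≤ 2) :
    x ≤ 2 * log (1 + x) := by
  have h := le_log_one_add_of_nonneg hx₀
  rw [div_le_iff₀ (by linarith)] at h
  nlinarith

theorem Finset.prod_le_sum_div_card_pow {ι : Type*} (s : Finset ι) {z : ι → ℝ}
    (hz : ∀ i ∈ s, 0 ≤ z i) : ∏ i ∈ s, z i ≤ ((∑ i ∈ s, z i) / #s) ^ #s := by
  rcases s.eq_empty_or_nonempty with rfl | hs
  · simp
  have hcard : (#s : ℝ) ≠ 0 := by exact_mod_cast hs.card_pos.ne'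
  have amgm := geom_mean_le_arith_mean_weighted s (fun _ ↦ (#s : ℝ)⁻¹) z
    (fun _ _ ↦ by positivity) (by simp [hcard]) hz
  rw [← mul_sum, inv_mul_eq_div] at amgm
  calc ∏ i ∈ s, z i = (∏ i ∈ s, z i ^ (#s : ℝ)⁻¹) ^ #s := by
        rw [← prod_pow]
        refine prod_congr rfl fun i hi ↦ ?_
        rw [← rpow_natCast, ← rpow_mul (hz i hi), inv_mul_cancel₀ hcard, rpow_one]
    _ ≤ ((∑ i ∈ s, z i) / #s) ^ #s :=
        pow_le_pow_left₀ (prod_nonneg fun i hi ↦ rpow_nonneg (hz i hi) _) amgm _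

namespace Matrix

variable {n : Type*}

section

variable [Fintype n] [DecidableEq n]

theorem PosSemidef.det_le_trace_div_card_pow {A : Matrix n n ℝ} (hA : A.PosSemidef) :
    A.det ≤ (A.trace / Fintype.card n) ^ Fintype.card n := by
  rw [hA.isHermitian.det_eq_prod_eigenvalues, hA.isHermitian.trace_eq_sum_eigenvalues]
  simpa using prod_le_sum_div_card_pow univ fun i _ ↦ hA.eigenvalues_nonneg i

theorem det_add_vecMulVec {A : Matrix n n ℝ} (hA : IsUnit A.det) (u v : n → ℝ) :
    (A + vecMulVec u v).det = A.det * (1 + v ⬝ᵥ A⁻¹ *ᵥ u) := by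
  have : A + vecMulVec u v = A * (1 + vecMulVec (A⁻¹ *ᵥ u) v) := by
    rw [Matrix.mul_add, Matrix.mul_one, mul_vecMulVec, mulVec_mulVec, mul_nonsing_inv _ hA,
      one_mulVec]
  rw [this, det_mul, vecMulVec_eq Unit, det_one_add_replicateCol_mul_replicateRow]

theorem dotProduct_inv_mulVec_le {A : Matrix n n ℝ} (hA : IsUnit A.det) {c : ℝ} (hc : 0 < c)
    (hAc : ∀ x, c * (x ⬝ᵥ x) ≤ x ⬝ᵥ A *ᵥ x) (v : n → ℝ) :
    v ⬝ᵥ A⁻¹ *ᵥ v ≤ (v ⬝ᵥ v) / c := by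
  set y := A⁻¹ *ᵥ v
  have hAy : A *ᵥ y = v := by rw [mulVec_mulVec, mul_nonsing_inv _ hA, one_mulVec]
  have hy : c * (y ⬝ᵥ y) ≤ v ⬝ᵥ y := by simpa [hAy, dotProduct_comm y v] using hAc y
  -- expand `0 ≤ ‖v - c • A⁻¹ v‖²`
  have hsq : 0 ≤ (v - c • y) ⬝ᵥ (v - c • y) := dotProduct_self_star_nonneg (v - c • y)
  simp only [sub_dotProduct, dotProduct_sub, smul_dotProduct, dotProduct_smul, smul_eq_mul,
    dotProduct_comm y v] at hsq
  rw [le_div_iff₀ hc]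
  nlinarith

end

def regularizedGram [DecidableEq n] (lam : ℝ) (φ : ℕ → n → ℝ) (t : ℕ) : Matrix n n ℝ :=
  lam • 1 + ∑ s ∈ range t, vecMulVec (φ s) (φ s)

namespace regularizedGram

variable [DecidableEq n] {lam : ℝ} {φ : ℕ → n → ℝ}

theorem succ (t : ℕ) :
    regularizedGram lam φ (t + 1) = regularizedGram lam φ t + vecMulVec (φ t) (φ t) := by
  simp only [regularizedGram, sum_range_succ, add_assoc]

variable [Fintype n]

theorem det_zero : (regularizedGram lam φ 0).det = lam ^ Fintype.card n := by
  simp [regularizedGram]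

theorem trace_eq (t : ℕ) :
    (regularizedGram lam φ t).trace = lam * Fintype.card n + ∑ s ∈ range t, φ s ⬝ᵥ φ s := by
  simp [regularizedGram, trace_sum, trace_vecMulVec]

theorem dotProduct_mulVec (t : ℕ) (x : n → ℝ) :
    x ⬝ᵥ regularizedGram lam φ t *ᵥ x = lam * (x ⬝ᵥ x) + ∑ s ∈ range t, (φ s ⬝ᵥ x) ^ 2 := by
  rw [dotProduct_comm]
  simp only [regularizedGram, add_mulVec, sum_mulVec, vecMulVec_mulVec, smul_mulVec, one_mulVec,
    op_smul_eq_smul, add_dotProduct, sum_dotProduct, smul_dotProduct, smul_eq_mul, sq]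

theorem posDef (hlam : 0 < lam) (t : ℕ) : (regularizedGram lam φ t).PosDef := by
  refine PosDef.add_posSemidef ?_ (posSemidef_sum _ fun s _ ↦ ?_)
  · rw [smul_one_eq_diagonal]
    exact posDef_diagonal_iff.mpr fun _ ↦ hlam
  · simpa using posSemidef_vecMulVec_self_star (φ s)

theorem potential_nonneg (hlam : 0 < lam) (t : ℕ) :
    0 ≤ φ t ⬝ᵥ (regularizedGram lam φ t)⁻¹ *ᵥ φ t := by
  simpa using (posDef hlam t).inv.posSemidef.dotProduct_mulVec_nonneg (φ t)

theorem potential_le (hlam : 0 < lam) (t : ℕ) :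
    φ t ⬝ᵥ (regularizedGram lam φ t)⁻¹ *ᵥ φ t ≤ (φ t ⬝ᵥ φ t) / lam :=
  dotProduct_inv_mulVec_le (posDef hlam t).det_pos.ne'.isUnit hlam
    (fun x ↦ by rw [dotProduct_mulVec]; exact le_add_of_nonneg_right (by positivity)) (φ t)

theorem det_succ (hlam : 0 < lam) (t : ℕ) :
    (regularizedGram lam φ (t + 1)).det =
      (regularizedGram lam φ t).det * (1 + φ t ⬝ᵥ (regularizedGram lam φ t)⁻¹ *ᵥ φ t) := by
  rw [succ, det_add_vecMulVec (posDef hlam t).det_pos.ne'.isUnit]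

theorem sum_log_one_add_potential (hlam : 0 < lam) (T : ℕ) :
    ∑ t ∈ range T, log (1 + φ t ⬝ᵥ (regularizedGram lam φ t)⁻¹ *ᵥ φ t) =
      log (regularizedGram lam φ T).det - log (regularizedGram lam φ 0).det := by
  induction T with
  | zero => simp
  | succ T ih =>
    have hw : 0 < 1 + φ T ⬝ᵥ (regularizedGram lam φ T)⁻¹ *ᵥ φ T := by
      linarith [potential_nonneg (φ := φ) hlam T]
    rw [sum_range_succ, ih, det_succ hlam, log_mul (posDef hlam T).det_pos.ne' hw.ne']
    ring

theorem log_det_sub_log_det_zero_le (hlam : 0 < lam) {T : ℕ}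
    (hφ : ∀ t ∈ range T, φ t ⬝ᵥ φ t ≤ 1) :
    log (regularizedGram lam φ T).det - log (regularizedGram lam φ 0).det ≤
      Fintype.card n * log (1 + T / (lam * Fintype.card n)) := by
  set k := Fintype.card n
  have htrace : (regularizedGram lam φ T).trace / k ≤ lam + T / k := by
    rw [trace_eq, add_div, mul_div_assoc]
    gcongr
    · exact mul_le_of_le_one_right hlam.le (div_self_le_one _)
    · simpa using sum_le_sum hφ
  have hdet : (regularizedGram lam φ T).det ≤ (lam + T / k) ^ k :=
    (posDef hlam T).posSemidef.det_le_trace_div_card_pow.trans <|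
      pow_le_pow_left₀ (div_nonneg (posDef hlam T).posSemidef.trace_nonneg k.cast_nonneg) htrace k
  have hgrowth : (lam + T / k) / lam = 1 + T / (lam * k) := by
    rw [add_div, div_self hlam.ne', div_div, mul_comm]
  calc log (regularizedGram lam φ T).det - log (regularizedGram lam φ 0).det
      ≤ log ((lam + T / k) ^ k) - log (lam ^ k) := by
        rw [det_zero]
        gcongr
        exact (posDef hlam T).det_pos
    _ = k * log (1 + T / (lam * k)) := by
        rw [log_pow, log_pow, ← mul_sub, ← log_div (by positivity) hlam.ne', hgrowth]

end regularizedGram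

end Matrix

theorem elliptical_potential_general
    (d T : ℕ) (lam : ℝ) (hlam : 1 ≤ lam)
    (φ : ℕ → (Fin d → ℝ))
    (hφ : ∀ t ∈ Finset.range T, Real.sqrt (∑ i, (φ t i) ^ 2) ≤ 1)
    (Λ : ℕ → Matrix (Fin d) (Fin d) ℝ)
    (hΛ : ∀ t, Λ t = lam • (1 : Matrix (Fin d) (Fin d) ℝ)
        + ∑ s ∈ Finset.range t, Matrix.vecMulVec (φ s) (φ s)) :
    (∀ t ≤ T, (Λ t).PosDef) ∧
    ∑ t ∈ Finset.range T, φ t ⬝ᵥ ((Λ t)⁻¹ *ᵥ φ t)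
      ≤ 2 * d * Real.log (1 + T / (lam * d)) := by
  have hlam₀ : 0 < lam := by linarith
  obtain rfl : Λ = regularizedGram lam φ := funext hΛ
  have hnorm : ∀ t ∈ range T, φ t ⬝ᵥ φ t ≤ 1 := fun t ht ↦ by
    simpa [dotProduct, sq] using sqrt_le_one.mp (hφ t ht)
  refine ⟨fun t _ ↦ regularizedGram.posDef hlam₀ t, ?_⟩
  calc ∑ t ∈ range T, φ t ⬝ᵥ (regularizedGram lam φ t)⁻¹ *ᵥ φ t
      ≤ ∑ t ∈ range T, 2 * log (1 + φ t ⬝ᵥ (regularizedGram lam φ t)⁻¹ *ᵥ φ t) := by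
        refine sum_le_sum fun t ht ↦ le_two_mul_log_one_add
          (regularizedGram.potential_nonneg hlam₀ t) ?_
        have hpot := regularizedGram.potential_le (φ := φ) hlam₀ t
        have hratio : (φ t ⬝ᵥ φ t) / lam ≤ 1 := (div_le_one hlam₀).mpr ((hnorm t ht).trans hlam)
        linarith
    _ = 2 * (log (regularizedGram lam φ T).det - log (regularizedGram lam φ 0).det) := by
        rw [← mul_sum, regularizedGram.sum_log_one_add_potential hlam₀]
    _ ≤ 2 * d * log (1 + T / (lam * d)) := by
        rw [mul_assoc]
        gcongr
        simpa using regularizedGram.log_det_sub_log_det_zero_le hlam₀ hnorm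

/-- Elliptical potential lemma used to verify the Eluder-type condition for Lin-UCB. -/
theorem elliptical_potential
    (d T : ℕ) (hd : 0 < d) (hT : 0 < T) (lam : ℝ) (hlam : 1 ≤ lam)
    (φ : ℕ → (Fin d → ℝ))
    (hφ : ∀ t ∈ Finset.range T, Real.sqrt (∑ i, (φ t i) ^ 2) ≤ 1)
    (Λ : ℕ → Matrix (Fin d) (Fin d) ℝ)
    (hΛ : ∀ t, Λ t = lam • (1 : Matrix (Fin d) (Fin d) ℝ)
        + ∑ s ∈ Finset.range t, Matrix.vecMulVec (φ s) (φ s)) :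
    (∀ t ≤ T, (Λ t).PosDef) ∧
    ∑ t ∈ Finset.range T, φ t ⬝ᵥ ((Λ t)⁻¹ *ᵥ φ t)
      ≤ 2 * d * Real.log (1 + T / (lam * d)) :=
  elliptical_potential_general d T lam hlam φ hφ Λ hΛ
end

section
/- Cauchy–Schwarz aggregation step in the regret proof of Theorem 3.6: let T be a positive integer and c₁, …, c_T be nonnegative real numbers with S = ∑_{t=1}^T c_t. Then ∑_{t=1}^T √( c_t / (c_t + 1) ) ≤ T · √( S / (S + T) ). -/
open Real Finset

/-- Cauchy–Schwarz aggregation step in the regret proof of Theorem 3.6. -/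
theorem cauchy_schwarz_aggregation
    (T : ℕ) (hT : 0 < T) (c : ℕ → ℝ) (hc : ∀ t ∈ Finset.range T, 0 ≤ c t)
    (S : ℝ) (hS : S = ∑ t ∈ Finset.range T, c t) :
    ∑ t ∈ Finset.range T, Real.sqrt (c t / (c t + 1))
      ≤ (T : ℝ) * Real.sqrt (S / (S + T)) := by
  have hTpos : (0:ℝ) < T := by exact_mod_cast hT
  have hS0 : 0 ≤ S := by
    rw [hS]; exact Finset.sum_nonneg hc
  have hden : (0:ℝ) < S + T := by linarith
  have hpos : ∀ t ∈ Finset.range T, (0:ℝ) < c t + 1 := fun t ht => by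
    have := hc t ht; linarith
  -- Step 1: T^2 ≤ (S+T) * ∑ 1/(c t + 1)   (Cauchy–Schwarz / AM–HM)
  have key1 : (T:ℝ)^2 ≤ (S + T) * ∑ t ∈ Finset.range T, 1 / (c t + 1) := by
    have h := Finset.sum_mul_sq_le_sq_mul_sq (Finset.range T)
      (fun t => Real.sqrt (c t + 1)) (fun t => 1 / Real.sqrt (c t + 1))
    have e1 : ∑ t ∈ Finset.range T,
        Real.sqrt (c t + 1) * (1 / Real.sqrt (c t + 1)) = (T:ℝ) := by
      have h1 : ∀ t ∈ Finset.range T,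
          Real.sqrt (c t + 1) * (1 / Real.sqrt (c t + 1)) = 1 := by
        intro t ht
        have := hpos t ht
        rw [mul_one_div, div_self (Real.sqrt_ne_zero'.mpr this)]
      rw [Finset.sum_congr rfl h1]
      simp
    have e2 : ∑ t ∈ Finset.range T, Real.sqrt (c t + 1) ^ 2 = S + T := by
      rw [Finset.sum_congr rfl (fun t ht => Real.sq_sqrt (le_of_lt (hpos t ht))),
        Finset.sum_add_distrib, ← hS]
      simp
    have e3 : ∑ t ∈ Finset.range T, (1 / Real.sqrt (c t + 1)) ^ 2
        = ∑ t ∈ Finset.range T, 1 / (c t + 1) := by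
      refine Finset.sum_congr rfl (fun t ht => ?_)
      rw [div_pow, one_pow, Real.sq_sqrt (le_of_lt (hpos t ht))]
    rw [e1, e2, e3] at h
    exact h
  -- Step 2: ∑ c/(c+1) ≤ T*S/(S+T)
  have key2 : ∑ t ∈ Finset.range T, c t / (c t + 1) ≤ (T:ℝ) * S / (S + T) := by
    have e : ∑ t ∈ Finset.range T, c t / (c t + 1)
        = (T:ℝ) - ∑ t ∈ Finset.range T, 1 / (c t + 1) := by
      rw [eq_sub_iff_add_eq, ← Finset.sum_add_distrib]
      have h1 : ∀ t ∈ Finset.range T,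
          c t / (c t + 1) + 1 / (c t + 1) = 1 := by
        intro t ht
        have := hpos t ht
        field_simp
      rw [Finset.sum_congr rfl h1]
      simp
    rw [e]
    have h1 : (T:ℝ)^2 / (S + T) ≤ ∑ t ∈ Finset.range T, 1 / (c t + 1) :=
      (div_le_iff₀ hden).mpr (by linarith [key1])
    have : (T:ℝ) - (T:ℝ)^2 / (S + T) = (T:ℝ) * S / (S + T) := by
      field_simp; ring
    linarith
  -- Step 3: main Cauchy–Schwarz
  have key3 : (∑ t ∈ Finset.range T, Real.sqrt (c t / (c t + 1)))^2
      ≤ (T:ℝ) * ∑ t ∈ Finset.range T, c t / (c t + 1) := by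
    have h := Finset.sum_mul_sq_le_sq_mul_sq (Finset.range T)
      (fun _ => (1:ℝ)) (fun t => Real.sqrt (c t / (c t + 1)))
    simpa [Real.sq_sqrt, Finset.sum_congr rfl
      (fun t ht => Real.sq_sqrt (div_nonneg (hc t ht) (le_of_lt (hpos t ht))))] using h
  have hsum0 : 0 ≤ ∑ t ∈ Finset.range T, Real.sqrt (c t / (c t + 1)) :=
    Finset.sum_nonneg fun t ht => Real.sqrt_nonneg _
  have hrhs : (T:ℝ) * Real.sqrt (S / (S + T))
      = Real.sqrt ((T:ℝ)^2 * (S / (S + T))) := by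
    rw [Real.sqrt_mul (sq_nonneg _), Real.sqrt_sq (le_of_lt hTpos)]
  rw [hrhs]
  apply Real.le_sqrt_of_sq_le
  have h2 : (T:ℝ) * ∑ t ∈ Finset.range T, c t / (c t + 1)
      ≤ (T:ℝ) * ((T:ℝ) * S / (S + T)) :=
    mul_le_mul_of_nonneg_left key2 (le_of_lt hTpos)
  have h3 : (T:ℝ) * ((T:ℝ) * S / (S + T)) = (T:ℝ)^2 * (S / (S + T)) := by ring
  linarith
end
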